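/- Let k, m ≥ 1, Q ∈ ℝ^{k×k} symmetric, d ∈ ℝ^k, v ∈ ℝ, F ∈ ℝ^{k×m}, w ∈ ℝ^m, and τ, θ ∈ ℝ^k with τ ≥ 0 and θ ≥ 0 componentwise. Define F̂ := [F θ −τ] ∈ ℝ^{k×(m+2)} (F with appended columns θ and −τ) and ŵ := (w; 1; −1) ∈ ℝ^{m+2}. Suppose Λ₀, Λ_{m+1} ∈ ℝ^k with Λ₀ ≥ 0 and Λ_{m+1} ≥ 0, Λ ∈ ℝ^{k×m} with all entries nonnegative, and a symmetric P ∈ ℝ^{k×k} with all entries nonnegative satisfy: −Q − P − Λ₀τᵀ − τΛ₀ᵀ + ΛFᵀ + FΛᵀ + Λ_{m+1}θᵀ + θΛ_{m+1}ᵀ is positive semidefinite. Let M ∈ ℝ be any number such that 2(d − Λ₀ + Λw + Λ_{m+1})ᵀ y ≤ M for every y ∈ ℝ^k with Fᵀy ≤ w, τᵀy ≥ 1, θᵀy ≤ 1, y ≥ 0. Then for every pair (Y, y) that is Shor-feasible for the data (F̂, ŵ), one has ⟨Q, Y⟩ + 2dᵀy ≤ M. (This is the corollary bounding the DNN relaxation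 value φ̄ᴰ_{τ,θ} of the cut problem by v + max_{y ∈ R_τ ∩ Δ(θ)} 2(d − Λ₀ + Λw + Λ_{m+1})ᵀy.) -/

import Mathlib

open Matrix

noncomputable section

/-- Frobenius (trace) inner product of real matrices. -/
def frob {ι : Type} [Fintype ι] (A B : Matrix ι ι ℝ) : ℝ := (Aᵀ * B).trace

/-- `(Y, y)` is Shor-feasible for the data `(F, w)`. -/
def ShorFeasible {k : ℕ} {ι : Type} [Fintype ι]
    (F : Matrix (Fin k) ι ℝ) (w : ι → ℝ)
    (Y : Matrix (Fin k) (Fin k) ℝ) (y : Fin k → ℝ) : Prop :=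
  (∀ i, Fᵀ.mulVec y i ≤ w i) ∧
  (∀ i, 0 ≤ y i) ∧
  (∀ i j, 0 ≤ (Fᵀ * Y * F - vecMulVec w (Fᵀ.mulVec y) - vecMulVec (Fᵀ.mulVec y) w
      + vecMulVec w w) i j) ∧
  (∀ i j, 0 ≤ Y i j) ∧
  (∀ i j, 0 ≤ (vecMulVec w y - Fᵀ * Y) i j) ∧
  (fromBlocks Y (Matrix.of fun i (_ : Unit) => y i)
    (Matrix.of fun (_ : Unit) j => y j) 1).PosSemidef

/-- `F̂ := [F θ −τ]`: `F` with the columns `θ` and `−τ` appended. -/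
def Fhat {k m : ℕ} (F : Matrix (Fin k) (Fin m) ℝ) (τ θ : Fin k → ℝ) :
    Matrix (Fin k) (Fin m ⊕ Fin 2) ℝ :=
  Matrix.of fun a j => Sum.elim (fun i => F a i) (fun b => if b = 0 then θ a else -τ a) j

/-- `ŵ := (w; 1; −1)`. -/
def what {m : ℕ} (w : Fin m → ℝ) : Fin m ⊕ Fin 2 → ℝ :=
  Sum.elim w (fun b => if b = 0 then (1 : ℝ) else -1)

/-!
Weak duality. With `N = [Λ Λ_{m+1} Λ₀]` the certificate reads `Q = N F̂ᵀ + F̂ Nᵀ - P - S` with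
`S ⪰ 0` and `P ≥ 0`. For a Shor-feasible symmetric `(Y, y)` we have `⟨S, Y⟩ ≥ 0` (both are
positive semidefinite), `⟨P, Y⟩ ≥ 0` (both are entrywise nonnegative), and the cut constraint
`F̂ᵀ Y ≤ ŵ yᵀ` weighted by `N ≥ 0` gives `⟨N F̂ᵀ, Y⟩ = ⟨F̂ Nᵀ, Y⟩ ≤ (N ŵ)ᵀ y`. Hence
`⟨Q, Y⟩ + 2 dᵀy ≤ 2 (d + N ŵ)ᵀ y`, and `y` satisfies the linear constraints under which `M`
bounds this linear form.
-/

namespace Matrix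

variable {n ι R : Type*} [Fintype n] [Fintype ι]

open scoped ComplexOrder in
theorem PosSemidef.trace_mul_nonneg {𝕜 : Type*} [RCLike 𝕜] {A B : Matrix n n 𝕜}
    (hA : A.PosSemidef) (hB : B.PosSemidef) : 0 ≤ (A * B).trace := by
  classical
  open scoped MatrixOrder in
  obtain ⟨C, rfl⟩ := CStarAlgebra.nonneg_iff_eq_star_mul_self.mp hB.nonneg
  rw [← mul_assoc, trace_mul_comm]
  simpa only [mul_assoc, star_eq_conjTranspose] using
    (hA.mul_mul_conjTranspose_same C).trace_nonneg

theorem trace_mul_nonneg_of_nonneg [Semiring R] [PartialOrder R] [IsOrderedRing R]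
    {A : Matrix n ι R} {B : Matrix ι n R} (hA : ∀ i j, 0 ≤ A i j) (hB : ∀ i j, 0 ≤ B i j) :
    0 ≤ (A * B).trace :=
  Finset.sum_nonneg fun i _ => Finset.sum_nonneg fun j _ => mul_nonneg (hA i j) (hB j i)

end Matrix

section Frobenius

variable {n ι : Type} [Fintype n] [Fintype ι]

theorem frob_add_left (A B Y : Matrix n n ℝ) : frob (A + B) Y = frob A Y + frob B Y := by
  simp only [frob, transpose_add, add_mul, trace_add]

theorem frob_sub_left (A B Y : Matrix n n ℝ) : frob (A - B) Y = frob A Y - frob B Y := by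
  simp only [frob, transpose_sub, sub_mul, trace_sub]

theorem frob_nonneg_of_posSemidef {A Y : Matrix n n ℝ} (hA : A.PosSemidef)
    (hY : Y.PosSemidef) : 0 ≤ frob A Y := by
  rw [frob, ← conjTranspose_eq_transpose_of_trivial, hA.isHermitian.eq]
  exact hA.trace_mul_nonneg hY

theorem frob_nonneg_of_nonneg {A Y : Matrix n n ℝ} (hA : ∀ i j, 0 ≤ A i j)
    (hY : ∀ i j, 0 ≤ Y i j) : 0 ≤ frob A Y :=
  trace_mul_nonneg_of_nonneg (fun i j => hA j i) hY

theorem frob_transpose_left {Y : Matrix n n ℝ} (hY : Y.IsSymm) (A : Matrix n n ℝ) :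
    frob Aᵀ Y = frob A Y := by
  rw [frob, frob, transpose_transpose, ← trace_transpose, transpose_mul, hY.eq, trace_mul_comm]

theorem frob_mul_transpose_le {G N : Matrix n ι ℝ} {c : ι → ℝ} {Y : Matrix n n ℝ} {y : n → ℝ}
    (hN : ∀ a j, 0 ≤ N a j) (hGY : ∀ j a, 0 ≤ (vecMulVec c y - Gᵀ * Y) j a) :
    frob (G * Nᵀ) Y ≤ (N *ᵥ c) ⬝ᵥ y := by
  have key : (N * (vecMulVec c y - Gᵀ * Y)).trace = (N *ᵥ c) ⬝ᵥ y - frob (G * Nᵀ) Y := by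
    rw [Matrix.mul_sub, trace_sub, mul_vecMulVec, trace_vecMulVec, frob, transpose_mul,
      transpose_transpose, Matrix.mul_assoc]
  linarith [trace_mul_nonneg_of_nonneg hN hGY]

theorem frob_le_of_certificate {G N : Matrix n ι ℝ} {c : ι → ℝ} {P S Y : Matrix n n ℝ}
    {y : n → ℝ}
    (hN : ∀ a j, 0 ≤ N a j) (hP : ∀ a b, 0 ≤ P a b) (hS : S.PosSemidef)
    (hYs : Y.IsSymm) (hY : Y.PosSemidef) (hYnn : ∀ a b, 0 ≤ Y a b)
    (hGY : ∀ j a, 0 ≤ (vecMulVec c y - Gᵀ * Y) j a) :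
    frob (N * Gᵀ + G * Nᵀ - P - S) Y ≤ 2 * ((N *ᵥ c) ⬝ᵥ y) := by
  have hNG : frob (N * Gᵀ) Y ≤ (N *ᵥ c) ⬝ᵥ y := by
    rw [← frob_transpose_left hYs, transpose_mul, transpose_transpose]
    exact frob_mul_transpose_le hN hGY
  have hGN : frob (G * Nᵀ) Y ≤ (N *ᵥ c) ⬝ᵥ y := frob_mul_transpose_le hN hGY
  rw [frob_sub_left, frob_sub_left, frob_add_left]
  linarith [frob_nonneg_of_nonneg hP hYnn, frob_nonneg_of_posSemidef hS hY]

end Frobenius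

section Fhat

variable {k m : ℕ}

theorem Fhat_mul_transpose_Fhat (A B : Matrix (Fin k) (Fin m) ℝ) (σ η τ θ : Fin k → ℝ) :
    Fhat A σ η * (Fhat B τ θ)ᵀ = A * Bᵀ + vecMulVec η θ + vecMulVec σ τ := by
  ext a b
  simp [Fhat, mul_apply, Fintype.sum_sum_type, Fin.sum_univ_two, vecMulVec_apply, add_assoc]

theorem Fhat_mulVec_what (A : Matrix (Fin k) (Fin m) ℝ) (σ η : Fin k → ℝ) (w : Fin m → ℝ) :
    Fhat A σ η *ᵥ what w = A *ᵥ w + η + σ := by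
  ext a
  simp [Fhat, what, mulVec, dotProduct, Fintype.sum_sum_type, Fin.sum_univ_two, add_assoc]

theorem Fhat_transpose_mulVec_le_what_iff {F : Matrix (Fin k) (Fin m) ℝ} {τ θ y : Fin k → ℝ}
    {w : Fin m → ℝ} :
    (∀ i, ((Fhat F τ θ)ᵀ *ᵥ y) i ≤ what w i) ↔
      (∀ i, (Fᵀ *ᵥ y) i ≤ w i) ∧ θ ⬝ᵥ y ≤ 1 ∧ 1 ≤ τ ⬝ᵥ y := by
  simp [Sum.forall, Fin.forall_fin_two, Fhat, what, mulVec, dotProduct]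

end Fhat

theorem ShorFeasible.posSemidef {k : ℕ} {ι : Type} [Fintype ι] {F : Matrix (Fin k) ι ℝ}
    {w : ι → ℝ} {Y : Matrix (Fin k) (Fin k) ℝ} {y : Fin k → ℝ} (h : ShorFeasible F w Y y) :
    Y.PosSemidef :=
  h.2.2.2.2.2.submatrix Sum.inl

theorem dnn_cut_bound_general {k m : ℕ}
    (Q : Matrix (Fin k) (Fin k) ℝ) (d : Fin k → ℝ)
    (F : Matrix (Fin k) (Fin m) ℝ) (w : Fin m → ℝ)
    (τ θ : Fin k → ℝ)
    (Λ₀ Λm1 : Fin k → ℝ) (hΛ₀ : ∀ i, 0 ≤ Λ₀ i) (hΛm1 : ∀ i, 0 ≤ Λm1 i)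
    (Λ : Matrix (Fin k) (Fin m) ℝ) (hΛ : ∀ i j, 0 ≤ Λ i j)
    (P : Matrix (Fin k) (Fin k) ℝ) (hPnn : ∀ i j, 0 ≤ P i j)
    (hpsd : (-Q - P - vecMulVec Λ₀ τ - vecMulVec τ Λ₀ + Λ * Fᵀ + F * Λᵀ
        + vecMulVec Λm1 θ + vecMulVec θ Λm1).PosSemidef)
    (M : ℝ)
    (hM : ∀ y : Fin k → ℝ, (∀ i, Fᵀ.mulVec y i ≤ w i) → 1 ≤ τ ⬝ᵥ y → θ ⬝ᵥ y ≤ 1 →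
      (∀ i, 0 ≤ y i) →
      2 * ((fun i => d i - Λ₀ i + Λ.mulVec w i + Λm1 i) ⬝ᵥ y) ≤ M) :
    ∀ (Y : Matrix (Fin k) (Fin k) ℝ) (y : Fin k → ℝ), Y.IsSymm →
      ShorFeasible (Fhat F τ θ) (what w) Y y →
      frob Q Y + 2 * (d ⬝ᵥ y) ≤ M := by
  intro Y y hYs hY
  have hYpsd := hY.posSemidef
  obtain ⟨hlin, hy, -, hYnn, hcut, -⟩ := hY
  obtain ⟨hFy, hθy, hτy⟩ := Fhat_transpose_mulVec_le_what_iff.mp hlin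
  -- `Fhat` negates its second vector, so `N = [Λ Λ_{m+1} Λ₀]`.
  set N := Fhat Λ (-Λ₀) Λm1
  have hN : ∀ a j, 0 ≤ N a j := by
    rintro a (j | j)
    · exact hΛ a j
    · fin_cases j <;> simp [N, Fhat, hΛm1 a, hΛ₀ a]
  have hQ : Q = N * (Fhat F τ θ)ᵀ + Fhat F τ θ * Nᵀ - P
      - (-Q - P - vecMulVec Λ₀ τ - vecMulVec τ Λ₀ + Λ * Fᵀ + F * Λᵀ
        + vecMulVec Λm1 θ + vecMulVec θ Λm1) := by
    simp only [N, Fhat_mul_transpose_Fhat, neg_vecMulVec, vecMulVec_neg]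
    abel
  have hbound := frob_le_of_certificate hN hPnn hpsd hYs hYpsd hYnn hcut
  rw [← hQ, Fhat_mulVec_what] at hbound
  have hcoeff : (fun i => d i - Λ₀ i + Λ.mulVec w i + Λm1 i) = d + (Λ *ᵥ w + Λm1 + -Λ₀) := by
    ext i
    simp only [Pi.add_apply, Pi.neg_apply]
    ring
  have hMy := hM y hFy hτy hθy hy
  rw [hcoeff, add_dotProduct] at hMy
  linarith

/-- upper bound on the DNN relaxation value of the cut problem from a
certificate `(Λ₀, Λ, Λ_{m+1}, P)`. -/
theorem dnn_cut_bound {k m : ℕ} (hk : 1 ≤ k) (hm : 1 ≤ m)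
    (Q : Matrix (Fin k) (Fin k) ℝ) (hQ : Q.IsSymm) (d : Fin k → ℝ) (v : ℝ)
    (F : Matrix (Fin k) (Fin m) ℝ) (w : Fin m → ℝ)
    (τ θ : Fin k → ℝ) (hτ : ∀ i, 0 ≤ τ i) (hθ : ∀ i, 0 ≤ θ i)
    (Λ₀ Λm1 : Fin k → ℝ) (hΛ₀ : ∀ i, 0 ≤ Λ₀ i) (hΛm1 : ∀ i, 0 ≤ Λm1 i)
    (Λ : Matrix (Fin k) (Fin m) ℝ) (hΛ : ∀ i j, 0 ≤ Λ i j)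
    (P : Matrix (Fin k) (Fin k) ℝ) (hPs : P.IsSymm) (hPnn : ∀ i j, 0 ≤ P i j)
    (hpsd : (-Q - P - vecMulVec Λ₀ τ - vecMulVec τ Λ₀ + Λ * Fᵀ + F * Λᵀ
        + vecMulVec Λm1 θ + vecMulVec θ Λm1).PosSemidef)
    (M : ℝ)
    (hM : ∀ y : Fin k → ℝ, (∀ i, Fᵀ.mulVec y i ≤ w i) → 1 ≤ τ ⬝ᵥ y → θ ⬝ᵥ y ≤ 1 →
      (∀ i, 0 ≤ y i) →
      2 * ((fun i => d i - Λ₀ i + Λ.mulVec w i + Λm1 i) ⬝ᵥ y) ≤ M) :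
    ∀ (Y : Matrix (Fin k) (Fin k) ℝ) (y : Fin k → ℝ), Y.IsSymm →
      ShorFeasible (Fhat F τ θ) (what w) Y y →
      frob Q Y + 2 * (d ⬝ᵥ y) ≤ M :=
  dnn_cut_bound_general Q d F w τ θ Λ₀ Λm1 hΛ₀ hΛm1 Λ hΛ P hPnn hpsd M hM
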